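/- arXiv:math/0212293 — 2 statements merged into one kernel-verified Lean document; each statement's English description precedes it below -/
import Mathlib

section
/- For nonnegative measurable f on ℝ₊², and α, β > 0, one has ∬_{ℝ₊²} f(x,y) dx dy = (2/(αβ)) ∫₀^∞ r^{1/α + 1/β - 1} ∫₀^{π/2} f(r^{1/α} cos^{2/α} t, r^{1/β} sin^{2/β} t) · cos^{2/α - 1} t · sin^{2/β - 1} t dt dr. -/
/-!
Write `x = (r cos² t)^{1/α}` and `y = (r sin² t)^{1/β}`: then `r = x^α + y^β` and `t` is the angle
with `tan² t = y^β / x^α`, so `(r, t) ↦ (x, y)` is a bijection from `(0, ∞) × (0, π/2)` onto the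
open quadrant. Its Jacobian determinant is `2/(αβ) r^{1/α+1/β-1} cos^{2/α-1} t sin^{2/β-1} t`
(the two products of partial derivatives add up to a multiple of `cos² t + sin² t`), and the
formula is the change of variables theorem followed by Tonelli on both sides.
-/

open MeasureTheory Set Real ENNReal

theorem HasDerivAt.hasFDerivAt_mul_fst_snd {𝕜 : Type*} [NontriviallyNormedField 𝕜]
    {g h : 𝕜 → 𝕜} {g' h' : 𝕜} {p : 𝕜 × 𝕜} (hg : HasDerivAt g g' p.1) (hh : HasDerivAt h h' p.2) :
    HasFDerivAt (fun q : 𝕜 × 𝕜 => g q.1 * h q.2)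
      ((g' * h p.2) • ContinuousLinearMap.fst 𝕜 𝕜 𝕜 + (g p.1 * h') • ContinuousLinearMap.snd 𝕜 𝕜 𝕜)
      p := by
  refine ((hg.comp_hasFDerivAt p hasFDerivAt_fst).mul
    (hh.comp_hasFDerivAt p hasFDerivAt_snd)).congr_fderiv ?_
  simp only [Function.comp_apply, smul_smul, add_comm, mul_comm]

theorem exists_mem_Ioo_mul_cos_sq_and_mul_sin_sq {u v : ℝ} (hu : 0 < u) (hv : 0 < v) :
    ∃ t ∈ Ioo 0 (π / 2), (u + v) * cos t ^ 2 = u ∧ (u + v) * sin t ^ 2 = v := by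
  have hcos : (u + v) * cos (arctan √(v / u)) ^ 2 = u := by
    rw [cos_sq_arctan, sq_sqrt (by positivity)]
    field_simp
  refine ⟨arctan √(v / u), ⟨arctan_pos.2 (by positivity), arctan_lt_pi_div_two _⟩, hcos, ?_⟩
  linear_combination (u + v) * sin_sq_add_cos_sq (arctan √(v / u)) - hcos

namespace LevelSetCoord

noncomputable def toFun (α β : ℝ) (p : ℝ × ℝ) : ℝ × ℝ :=
  (p.1 ^ (1 / α) * cos p.2 ^ (2 / α), p.1 ^ (1 / β) * sin p.2 ^ (2 / β))

noncomputable def jacobian (α β : ℝ) (p : ℝ × ℝ) : Matrix (Fin 2) (Fin 2) ℝ :=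
  !![1 / α * p.1 ^ (1 / α - 1) * cos p.2 ^ (2 / α),
      p.1 ^ (1 / α) * (2 / α * cos p.2 ^ (2 / α - 1) * -sin p.2);
    1 / β * p.1 ^ (1 / β - 1) * sin p.2 ^ (2 / β),
      p.1 ^ (1 / β) * (2 / β * sin p.2 ^ (2 / β - 1) * cos p.2)]

def source : Set (ℝ × ℝ) := Ioi 0 ×ˢ Ioo 0 (π / 2)

variable {α β : ℝ}

theorem measurableSet_source : MeasurableSet source :=
  measurableSet_Ioi.prod measurableSet_Ioo

theorem pos_of_mem_source {p : ℝ × ℝ} (hp : p ∈ source) :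
    0 < p.1 ∧ 0 < cos p.2 ∧ 0 < sin p.2 :=
  ⟨hp.1, cos_pos_of_mem_Ioo ⟨by linarith [hp.2.1, pi_pos], hp.2.2⟩,
    sin_pos_of_mem_Ioo ⟨hp.2.1, by linarith [hp.2.2, pi_pos]⟩⟩

theorem hasFDerivAt_toFun {p : ℝ × ℝ} (hr : p.1 ≠ 0) (hc : cos p.2 ≠ 0) (hs : sin p.2 ≠ 0) :
    HasFDerivAt (toFun α β) (LinearMap.toContinuousLinearMap (Matrix.toLin
      (Module.Basis.finTwoProd ℝ) (Module.Basis.finTwoProd ℝ) (jacobian α β p))) p := by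
  rw [jacobian, Matrix.toLin_finTwoProd_toContinuousLinearMap]
  exact .prodMk
    ((hasDerivAt_rpow_const (Or.inl hr)).hasFDerivAt_mul_fst_snd
      ((hasDerivAt_rpow_const (Or.inl hc)).comp p.2 (hasDerivAt_cos p.2)))
    ((hasDerivAt_rpow_const (Or.inl hr)).hasFDerivAt_mul_fst_snd
      ((hasDerivAt_rpow_const (Or.inl hs)).comp p.2 (hasDerivAt_sin p.2)))

theorem det_jacobian {p : ℝ × ℝ} (hr : 0 < p.1) (hc : cos p.2 ≠ 0) (hs : sin p.2 ≠ 0) :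
    (jacobian α β p).det = 2 / (α * β) *
      (p.1 ^ (1 / α + 1 / β - 1) * (cos p.2 ^ (2 / α - 1) * sin p.2 ^ (2 / β - 1))) := by
  have hr₁ : p.1 ^ (1 / α - 1) * p.1 ^ (1 / β) = p.1 ^ (1 / α + 1 / β - 1) := by
    rw [← rpow_add hr]; ring_nf
  have hr₂ : p.1 ^ (1 / α) * p.1 ^ (1 / β - 1) = p.1 ^ (1 / α + 1 / β - 1) := by
    rw [← rpow_add hr]; ring_nf
  have hc' : cos p.2 ^ (2 / α) = cos p.2 ^ (2 / α - 1) * cos p.2 := by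
    rw [← rpow_add_one hc, sub_add_cancel]
  have hs' : sin p.2 ^ (2 / β) = sin p.2 ^ (2 / β - 1) * sin p.2 := by
    rw [← rpow_add_one hs, sub_add_cancel]
  rw [jacobian, Matrix.det_fin_two_of, hc', hs']
  linear_combination (2 / (α * β) * (cos p.2 ^ (2 / α - 1) * sin p.2 ^ (2 / β - 1))) *
    (cos p.2 ^ 2 * hr₁ + sin p.2 ^ 2 * hr₂ + p.1 ^ (1 / α + 1 / β - 1) * sin_sq_add_cos_sq p.2)

theorem ofReal_abs_det_jacobian (hα : 0 < α) (hβ : 0 < β) {p : ℝ × ℝ} (hp : p ∈ source) :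
    ENNReal.ofReal |(LinearMap.toContinuousLinearMap (Matrix.toLin
      (Module.Basis.finTwoProd ℝ) (Module.Basis.finTwoProd ℝ) (jacobian α β p))).det|
      = ENNReal.ofReal (2 / (α * β)) * (ENNReal.ofReal (p.1 ^ (1 / α + 1 / β - 1)) *
          ENNReal.ofReal (cos p.2 ^ (2 / α - 1) * sin p.2 ^ (2 / β - 1))) := by
  obtain ⟨hr, hc, hs⟩ := pos_of_mem_source hp
  have hpos := rpow_pos_of_pos hr (1 / α + 1 / β - 1)
  have hcs := mul_pos (rpow_pos_of_pos hc (2 / α - 1)) (rpow_pos_of_pos hs (2 / β - 1))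
  rw [LinearMap.det_toContinuousLinearMap, LinearMap.det_toLin, det_jacobian hr hc.ne' hs.ne',
    abs_of_pos (by positivity), ofReal_mul (by positivity), ofReal_mul hpos.le]

theorem toFun_eq {r t : ℝ} (hr : 0 ≤ r) (hc : 0 ≤ cos t) (hs : 0 ≤ sin t) :
    toFun α β (r, t) = ((r * cos t ^ 2) ^ (1 / α), (r * sin t ^ 2) ^ (1 / β)) := by
  simp only [toFun, mul_rpow hr (sq_nonneg _), ← rpow_natCast_mul hc, ← rpow_natCast_mul hs,
    Nat.cast_ofNat, mul_one_div]

theorem injOn_toFun (hα : 0 < α) (hβ : 0 < β) : InjOn (toFun α β) source := by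
  rintro ⟨r₁, t₁⟩ hp₁ ⟨r₂, t₂⟩ hp₂ h
  obtain ⟨hr₁, hc₁, hs₁⟩ := pos_of_mem_source hp₁
  obtain ⟨hr₂, hc₂, hs₂⟩ := pos_of_mem_source hp₂
  rw [toFun_eq hr₁.le hc₁.le hs₁.le, toFun_eq hr₂.le hc₂.le hs₂.le, Prod.mk.injEq] at h
  have hx : r₁ * cos t₁ ^ 2 = r₂ * cos t₂ ^ 2 :=
    rpow_left_injOn (one_div_pos.2 hα).ne' (mul_nonneg hr₁.le (sq_nonneg _))
      (mul_nonneg hr₂.le (sq_nonneg _)) h.1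
  have hy : r₁ * sin t₁ ^ 2 = r₂ * sin t₂ ^ 2 :=
    rpow_left_injOn (one_div_pos.2 hβ).ne' (mul_nonneg hr₁.le (sq_nonneg _))
      (mul_nonneg hr₂.le (sq_nonneg _)) h.2
  have hr : r₁ = r₂ := by
    linear_combination hx + hy - r₁ * sin_sq_add_cos_sq t₁ + r₂ * sin_sq_add_cos_sq t₂
  subst hr
  have hsin : sin t₁ = sin t₂ :=
    (pow_left_inj₀ hs₁.le hs₂.le two_ne_zero).1 (mul_left_cancel₀ hr₁.ne' hy)
  have hmem : ∀ {t}, t ∈ Ioo 0 (π / 2) → t ∈ Icc (-(π / 2)) (π / 2) := fun ht =>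
    ⟨by linarith [ht.1, pi_pos], ht.2.le⟩
  exact congrArg (Prod.mk r₁) (injOn_sin (hmem hp₁.2) (hmem hp₂.2) hsin)

theorem image_toFun (hα : 0 < α) (hβ : 0 < β) : toFun α β '' source = Ioi 0 ×ˢ Ioi 0 := by
  refine Subset.antisymm ?_ fun ⟨x, y⟩ ⟨hx, hy⟩ => ?_
  · rintro _ ⟨p, hp, rfl⟩
    obtain ⟨hr, hc, hs⟩ := pos_of_mem_source hp
    exact ⟨mul_pos (rpow_pos_of_pos hr _) (rpow_pos_of_pos hc _),
      mul_pos (rpow_pos_of_pos hr _) (rpow_pos_of_pos hs _)⟩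
  obtain ⟨t, ht, hct, hst⟩ :=
    exists_mem_Ioo_mul_cos_sq_and_mul_sin_sq (rpow_pos_of_pos hx α) (rpow_pos_of_pos hy β)
  have hr : 0 < x ^ α + y ^ β := add_pos (rpow_pos_of_pos hx α) (rpow_pos_of_pos hy β)
  obtain ⟨-, hc, hs⟩ := pos_of_mem_source (p := (_, t)) ⟨hr, ht⟩
  refine ⟨(x ^ α + y ^ β, t), ⟨hr, ht⟩, ?_⟩
  rw [toFun_eq hr.le hc.le hs.le, hct, hst, one_div, one_div,
    rpow_rpow_inv (le_of_lt hx) hα.ne', rpow_rpow_inv (le_of_lt hy) hβ.ne']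

end LevelSetCoord

open LevelSetCoord in
/-- Change-of-variables formula adapted to the level sets `{x^α + y^β = r}`:
for nonnegative measurable `f` on `ℝ₊²` and `α, β > 0`,
`∬ f(x,y) dx dy = (2/(αβ)) ∫₀^∞ r^{1/α+1/β-1} ∫₀^{π/2}
   f(r^{1/α} cos^{2/α} t, r^{1/β} sin^{2/β} t) cos^{2/α-1} t sin^{2/β-1} t dt dr`. -/
theorem stmt1 (α β : ℝ) (hα : 0 < α) (hβ : 0 < β) (f : ℝ → ℝ → ℝ≥0∞)
    (hf : Measurable (Function.uncurry f)) :
    ∫⁻ x in Ioi (0:ℝ), ∫⁻ y in Ioi (0:ℝ), f x y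
      = ENNReal.ofReal (2/(α*β)) *
        ∫⁻ r in Ioi (0:ℝ), ENNReal.ofReal (r ^ (1/α + 1/β - 1)) *
          ∫⁻ t in Ioo 0 (π/2),
            ENNReal.ofReal ((cos t) ^ (2/α - 1) * (sin t) ^ (2/β - 1)) *
              f (r ^ (1/α) * (cos t) ^ (2/α)) (r ^ (1/β) * (sin t) ^ (2/β)) := by
  calc ∫⁻ x in Ioi (0:ℝ), ∫⁻ y in Ioi (0:ℝ), f x y
      = ∫⁻ p in Ioi 0 ×ˢ Ioi 0, f p.1 p.2 := by
        rw [Measure.volume_eq_prod]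
        exact (setLIntegral_prod (fun p : ℝ × ℝ => f p.1 p.2) hf.aemeasurable).symm
    _ = ∫⁻ p in source, ENNReal.ofReal (2 / (α * β)) * (ENNReal.ofReal (p.1 ^ (1/α + 1/β - 1)) *
          (ENNReal.ofReal (cos p.2 ^ (2/α - 1) * sin p.2 ^ (2/β - 1)) *
            f (toFun α β p).1 (toFun α β p).2)) := by
        rw [← image_toFun hα hβ, lintegral_image_eq_lintegral_abs_det_fderiv_mul volume
          measurableSet_source (fun p hp => let ⟨hr, hc, hs⟩ := pos_of_mem_source hp
            (hasFDerivAt_toFun hr.ne' hc.ne' hs.ne').hasFDerivWithinAt) (injOn_toFun hα hβ)]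
        refine setLIntegral_congr_fun measurableSet_source fun p hp => ?_
        rw [ofReal_abs_det_jacobian hα hβ hp, mul_assoc, mul_assoc]
    _ = _ := by
        rw [lintegral_const_mul' _ _ ofReal_ne_top, source, Measure.volume_eq_prod,
          setLIntegral_prod _ (by fun_prop)]
        simp only [lintegral_const_mul' _ _ ofReal_ne_top, toFun]
end

section
/- Let ψ be a smooth function on ℝ with compact support contained in [1,2] and ψ not identically zero, and let α ≤ -1/2 ≤ β be real numbers. Then the function k(x,y) = x^α y^β ψ(x+y) on ℝ₊² is not square-integrable: ∬_{ℝ₊²} |k(x,y)|² dx dy = +∞. -/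
open MeasureTheory Set

lemma key_div {r : ℝ} (hr : 0 < r) :
    ∫⁻ x in Ioo (0:ℝ) r, ENNReal.ofReal x⁻¹ = ⊤ := by
  by_contra h
  have hI : IntegrableOn (fun x : ℝ => x ^ (-1 : ℝ)) (Ioo 0 r) := by
    refine ⟨(by measurability : Measurable fun x : ℝ => x ^ (-1:ℝ)).aestronglyMeasurable, ?_⟩
    rw [hasFiniteIntegral_iff_ofReal]
    · have heq : (∫⁻ x in Ioo (0:ℝ) r, ENNReal.ofReal (x ^ (-1:ℝ)))
          = ∫⁻ x in Ioo (0:ℝ) r, ENNReal.ofReal x⁻¹ := by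
        refine setLIntegral_congr_fun measurableSet_Ioo ?_
        intro x hx
        simp only [Real.rpow_neg_one]
      rw [heq]
      exact lt_top_iff_ne_top.2 h
    · refine (ae_restrict_iff' measurableSet_Ioo).2 (Filter.Eventually.of_forall ?_)
      intro x hx
      exact Real.rpow_nonneg hx.1.le _
  rw [intervalIntegral.integrableOn_Ioo_rpow_iff hr] at hI
  linarith

/-- If `ψ` is a nonzero smooth function with support in `[1,2]` and `α ≤ -1/2 ≤ β`,
then the kernel `k(x,y) = x^α y^β ψ(x+y)` is not square-integrable on `ℝ₊²`. -/
theorem stmt4 (ψ : ℝ → ℝ) (hsm : ContDiff ℝ (⊤ : ℕ∞) ψ) (hsupp : tsupport ψ ⊆ Icc 1 2)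
    (hne : ψ ≠ 0) (α β : ℝ) (hα : α ≤ -(1/2)) (hβ : -(1/2) ≤ β) :
    ∫⁻ q in (Ioi (0:ℝ)) ×ˢ (Ioi (0:ℝ)),
      ENNReal.ofReal ((q.1 ^ α * q.2 ^ β * ψ (q.1 + q.2)) ^ 2) = ⊤ := by
  have hcont : Continuous ψ := hsm.continuous
  have h0 : ∀ t < (1:ℝ), ψ t = 0 := by
    intro t ht
    by_contra hcc
    have : t ∈ Icc (1:ℝ) 2 := hsupp (subset_tsupport ψ hcc)
    linarith [this.1]
  have hψ1 : ψ 1 = 0 := by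
    have h1 : Filter.Tendsto ψ (nhdsWithin 1 (Iio 1)) (nhds (ψ 1)) :=
      (hcont.continuousAt.continuousWithinAt).tendsto
    have h2 : Filter.Tendsto ψ (nhdsWithin 1 (Iio 1)) (nhds 0) := by
      refine Filter.Tendsto.congr' ?_ tendsto_const_nhds
      exact eventually_nhdsWithin_of_forall (fun t ht => (h0 t ht).symm)
    exact tendsto_nhds_unique h1 h2
  obtain ⟨t₀, ht₀⟩ : ∃ t, ψ t ≠ 0 := by
    by_contra hcc
    push_neg at hcc
    exact hne (funext hcc)
  have ht₀mem : t₀ ∈ Icc (1:ℝ) 2 := hsupp (subset_tsupport ψ ht₀)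
  have ht₀1 : 1 < t₀ := lt_of_le_of_ne ht₀mem.1 (fun h => ht₀ (h ▸ hψ1))
  set c : ℝ := |ψ t₀| / 2 with hc_def
  have hc : 0 < c := div_pos (abs_pos.2 ht₀) two_pos
  obtain ⟨δ', hδ'pos, hδ'⟩ := Metric.continuousAt_iff.1 hcont.continuousAt c hc
  set δ : ℝ := min δ' (t₀ - 1) with hδ_def
  have hδpos : 0 < δ := lt_min hδ'pos (by linarith)
  have hδle : δ ≤ t₀ - 1 := min_le_right _ _
  have habs : ∀ t : ℝ, |t - t₀| < δ → c ≤ |ψ t| := by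
    intro t ht
    have h4 := hδ' (show dist t t₀ < δ' from lt_of_lt_of_le ht (min_le_left _ _))
    rw [Real.dist_eq] at h4
    have h3 : |ψ t₀| - |ψ t| ≤ |ψ t - ψ t₀| := (abs_sub_comm (ψ t) (ψ t₀)) ▸ abs_sub_abs_le_abs_sub _ _
    rw [hc_def]; linarith
  set A : Set ℝ := Ioo 0 (δ/2) with hA
  set B : Set ℝ := Icc (t₀ - δ/2) t₀ with hB
  set C : ℝ := c ^ 2 / 2 with hC
  have hCpos : 0 < C := by positivity
  -- pointwise lower bound on A ×ˢ B
  have hpt : ∀ q : ℝ × ℝ, q ∈ A ×ˢ B →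
      ENNReal.ofReal (q.1⁻¹ * C) ≤
        ENNReal.ofReal ((q.1 ^ α * q.2 ^ β * ψ (q.1 + q.2)) ^ 2) := by
    rintro ⟨x, y⟩ ⟨hx, hy⟩
    simp only [hA, mem_Ioo] at hx
    simp only [hB, mem_Icc] at hy
    have hxpos : 0 < x := hx.1
    have hy1 : 1 < y := by linarith [hy.1]
    have hy2 : y ≤ 2 := le_trans hy.2 ht₀mem.2
    apply ENNReal.ofReal_le_ofReal
    have e1 : x ^ (-(1/2) : ℝ) ≤ x ^ α :=
      Real.rpow_le_rpow_of_exponent_ge hxpos (by linarith [hδle]) hα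
    have e2 : y ^ (-(1/2) : ℝ) ≤ y ^ β :=
      Real.rpow_le_rpow_of_exponent_le hy1.le hβ
    have e1' : x⁻¹ ≤ (x ^ α) ^ 2 := by
      have hsq := pow_le_pow_left₀ (Real.rpow_nonneg hxpos.le _) e1 2
      calc x⁻¹ = (x ^ (-(1/2):ℝ)) ^ 2 := by
            rw [← Real.rpow_natCast (x ^ (-(1/2):ℝ)) 2, ← Real.rpow_mul hxpos.le]
            norm_num
            exact (Real.rpow_neg_one x).symm
        _ ≤ (x ^ α) ^ 2 := hsq
    have e2' : (1:ℝ)/2 ≤ (y ^ β) ^ 2 := by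
      have h22 := pow_le_pow_left₀ (Real.rpow_nonneg (by linarith : (0:ℝ) ≤ y) _) e2 2
      have hyy : (y ^ (-(1/2):ℝ)) ^ 2 = y⁻¹ := by
        rw [← Real.rpow_natCast (y ^ (-(1/2):ℝ)) 2, ← Real.rpow_mul (by linarith : (0:ℝ) ≤ y)]
        norm_num
        exact Real.rpow_neg_one y
      have h12 : (1:ℝ)/2 ≤ y⁻¹ := by
        rw [one_div]
        exact inv_anti₀ (by linarith) hy2
      rw [hyy] at h22
      linarith
    have e3 : c ^ 2 ≤ (ψ (x + y)) ^ 2 := by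
      have habs' : c ≤ |ψ (x + y)| := by
        apply habs
        rw [abs_lt]
        constructor
        · linarith [hx.1, hy.1]
        · linarith [hx.2, hy.2]
      calc c ^ 2 ≤ |ψ (x + y)| ^ 2 := pow_le_pow_left₀ hc.le habs' 2
        _ = (ψ (x + y)) ^ 2 := sq_abs _
    have expand : (x ^ α * y ^ β * ψ (x + y)) ^ 2
        = (x ^ α) ^ 2 * (y ^ β) ^ 2 * (ψ (x + y)) ^ 2 := by ring
    have m1 := mul_le_mul e1' e2' (by norm_num) (sq_nonneg (x ^ α))
    have m2 := mul_le_mul m1 e3 (sq_nonneg c) (by positivity)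
    have hr : x⁻¹ * C = x⁻¹ * (1/2) * c ^ 2 := by rw [hC]; ring
    rw [expand, hr]
    exact m2
  have hvolB : volume B = ENNReal.ofReal (δ/2) := by
    rw [hB, Real.volume_Icc]
    congr 1
    ring
  have hdiv : ∫⁻ x in A, ENNReal.ofReal (x⁻¹ * C) = ⊤ := by
    calc ∫⁻ x in A, ENNReal.ofReal (x⁻¹ * C)
        = ∫⁻ x in A, ENNReal.ofReal x⁻¹ * ENNReal.ofReal C :=
          lintegral_congr fun x => by rw [ENNReal.ofReal_mul' hCpos.le]
      _ = (∫⁻ x in A, ENNReal.ofReal x⁻¹) * ENNReal.ofReal C :=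
          lintegral_mul_const' _ _ ENNReal.ofReal_ne_top
      _ = ⊤ := by
          rw [hA, key_div (by linarith : (0:ℝ) < δ/2)]
          exact ENNReal.top_mul (by simpa using (ENNReal.ofReal_pos.2 hCpos).ne')
  have hAB : ∫⁻ q in A ×ˢ B, ENNReal.ofReal (q.1⁻¹ * C) = ⊤ := by
    calc ∫⁻ q in A ×ˢ B, ENNReal.ofReal (q.1⁻¹ * C)
        = ∫⁻ x in A, ∫⁻ y in B, ENNReal.ofReal (x⁻¹ * C) := by
          rw [Measure.volume_eq_prod, ← Measure.prod_restrict]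
          exact lintegral_prod _ (by fun_prop)
      _ = ∫⁻ x in A, ENNReal.ofReal (x⁻¹ * C) * volume B :=
          lintegral_congr fun x => by rw [lintegral_const, Measure.restrict_apply_univ]
      _ = (∫⁻ x in A, ENNReal.ofReal (x⁻¹ * C)) * volume B :=
          lintegral_mul_const' _ _ (by rw [hvolB]; exact ENNReal.ofReal_ne_top)
      _ = ⊤ := by
          rw [hdiv, hvolB]
          exact ENNReal.top_mul (by simpa using (ENNReal.ofReal_pos.2 (by linarith : (0:ℝ) < δ/2)).ne')
  refine top_le_iff.1 ?_
  calc (⊤:ENNReal) = ∫⁻ q in A ×ˢ B, ENNReal.ofReal (q.1⁻¹ * C) := hAB.symm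
    _ ≤ ∫⁻ q in A ×ˢ B,
        ENNReal.ofReal ((q.1 ^ α * q.2 ^ β * ψ (q.1 + q.2)) ^ 2) :=
          setLIntegral_mono' (measurableSet_Ioo.prod measurableSet_Icc) hpt
    _ ≤ ∫⁻ q in (Ioi (0:ℝ)) ×ˢ (Ioi (0:ℝ)),
        ENNReal.ofReal ((q.1 ^ α * q.2 ^ β * ψ (q.1 + q.2)) ^ 2) := by
        apply lintegral_mono_set
        rintro ⟨x, y⟩ ⟨hx, hy⟩
        simp only [hA, mem_Ioo] at hx
        simp only [hB, mem_Icc] at hy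
        exact ⟨hx.1, by simp only [mem_Ioi]; linarith [hy.1]⟩
end
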